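/- arXiv:1904.00102 — 5 statements merged into one kernel-verified Lean document; each statement's English description precedes it below -/
import Mathlib

section
/- For Hermitian matrices A and B and t ≥ 0, ‖e^{−i(A+B)t} − e^{−iBt}e^{−iAt}‖ ≤ Σ_{k=1}^{∞} (t^{k+1}/k!)·‖ad_B^k(A)‖, where ad_B(A) = [B,A] and ad_B^k denotes the k-fold iterated commutator. -/
open NormedSpace

set_option maxHeartbeats 1000000
set_option synthInstance.maxHeartbeats 400000

lemma exp_add_of_commute_C {𝔹 : Type*} [NormedRing 𝔹] [NormedAlgebra ℂ 𝔹] [CompleteSpace 𝔹]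
    {x y : 𝔹} (hxy : Commute x y) : exp (x + y) = exp x * exp y :=
  exp_add_of_commute_of_mem_ball (𝕂 := ℂ) hxy
    ((expSeries_radius_eq_top ℂ 𝔹).symm ▸ edist_lt_top _ _)
    ((expSeries_radius_eq_top ℂ 𝔹).symm ▸ edist_lt_top _ _)

section AlgebraLemmas

variable {𝔸 : Type*} [NormedRing 𝔸] [NormedAlgebra ℂ 𝔸] [CompleteSpace 𝔸]

/-- Left multiplication operator. -/
noncomputable def LMul (X : 𝔸) : 𝔸 →L[ℂ] 𝔸 := ContinuousLinearMap.mul ℂ 𝔸 X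

/-- Right multiplication operator. -/
noncomputable def RMul (X : 𝔸) : 𝔸 →L[ℂ] 𝔸 := (ContinuousLinearMap.mul ℂ 𝔸).flip X

@[simp] lemma LMul_apply (X A : 𝔸) : LMul X A = X * A := rfl
@[simp] lemma RMul_apply (X A : 𝔸) : RMul X A = A * X := rfl

lemma exp_clm_apply (T : 𝔸 →L[ℂ] 𝔸) (A : 𝔸) :
    exp T A = ∑' n : ℕ, (n.factorial : ℂ)⁻¹ • (T ^ n) A := by
  rw [exp_eq_tsum ℂ]
  have h := (ContinuousLinearMap.apply ℂ 𝔸 A).map_tsum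
    (expSeries_summable' (𝕂 := ℂ) T)
  simpa using h

lemma LMul_pow_apply (X A : 𝔸) (n : ℕ) : ((LMul X) ^ n) A = X ^ n * A := by
  induction n with
  | zero => simp
  | succ n ih =>
    rw [pow_succ', ContinuousLinearMap.mul_apply, ih, LMul_apply, pow_succ', mul_assoc]

lemma RMul_pow_apply (X A : 𝔸) (n : ℕ) : ((RMul X) ^ n) A = A * X ^ n := by
  induction n with
  | zero => simp
  | succ n ih =>
    rw [pow_succ', ContinuousLinearMap.mul_apply, ih, RMul_apply, pow_succ, mul_assoc]

lemma exp_LMul (X A : 𝔸) : exp (LMul X) A = exp X * A := by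
  have h : exp X * A = ∑' n : ℕ, (n.factorial : ℂ)⁻¹ • (X ^ n * A) := by
    have h2 := ((ContinuousLinearMap.mul ℂ 𝔸).flip A).map_tsum
      (expSeries_summable' (𝕂 := ℂ) X)
    rw [exp_eq_tsum ℂ]
    simpa using h2
  rw [exp_clm_apply, h]
  exact tsum_congr fun n => by rw [LMul_pow_apply]

lemma exp_RMul (X A : 𝔸) : exp (RMul X) A = A * exp X := by
  have h : A * exp X = ∑' n : ℕ, (n.factorial : ℂ)⁻¹ • (A * X ^ n) := by
    have h2 := (ContinuousLinearMap.mul ℂ 𝔸 A).map_tsum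
      (expSeries_summable' (𝕂 := ℂ) X)
    rw [exp_eq_tsum ℂ]
    simpa using h2
  rw [exp_clm_apply, h]
  exact tsum_congr fun n => by rw [RMul_pow_apply]

lemma commute_LMul_RMul (X : 𝔸) : Commute (LMul X) (RMul X) := by
  ext M
  simp [mul_assoc]

lemma exp_ad_apply (X A : 𝔸) :
    exp (LMul X - RMul X) A = exp X * A * exp (-X) := by
  have hc : Commute (LMul X) (-(RMul X)) := (commute_LMul_RMul X).neg_right
  have h1 : LMul X - RMul X = LMul X + -(RMul X) := by rw [sub_eq_add_neg]
  have h2 : -(RMul X) = RMul (-X) := by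
    ext M; simp
  rw [h1, exp_add_of_commute_C hc, ContinuousLinearMap.mul_apply, h2, exp_RMul, exp_LMul,
    mul_assoc]

lemma ad_pow_apply (X A : 𝔸) (n : ℕ) :
    ((LMul X - RMul X) ^ n) A = (fun M => X * M - M * X)^[n] A := by
  induction n with
  | zero => simp
  | succ n ih =>
    rw [pow_succ', ContinuousLinearMap.mul_apply, ih, Function.iterate_succ_apply']
    simp

lemma iterate_comm_norm_le (X A : 𝔸) (n : ℕ) :
    ‖(fun M => X * M - M * X)^[n] A‖ ≤ (2 * ‖X‖) ^ n * ‖A‖ := by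
  induction n with
  | zero => simp
  | succ n ih =>
    rw [Function.iterate_succ_apply', pow_succ']
    calc ‖X * (fun M => X * M - M * X)^[n] A - (fun M => X * M - M * X)^[n] A * X‖
        ≤ ‖X * (fun M => X * M - M * X)^[n] A‖ + ‖(fun M => X * M - M * X)^[n] A * X‖ :=
          norm_sub_le _ _
      _ ≤ ‖X‖ * ‖(fun M => X * M - M * X)^[n] A‖ + ‖(fun M => X * M - M * X)^[n] A‖ * ‖X‖ := by
          gcongr <;> [exact norm_mul_le _ _; exact norm_mul_le _ _]
      _ = 2 * ‖X‖ * ‖(fun M => X * M - M * X)^[n] A‖ := by ring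
      _ ≤ 2 * ‖X‖ * ((2 * ‖X‖) ^ n * ‖A‖) := by
          gcongr
      _ = 2 * ‖X‖ * (2 * ‖X‖) ^ n * ‖A‖ := by ring

lemma summable_aux (x : ℝ) : Summable fun n : ℕ => x ^ (n + 1) / ((n + 1).factorial : ℝ) := by
  have h := (Real.summable_pow_div_factorial x).comp_injective (add_left_injective 1)
  exact h

lemma summable_comm_series (B A : 𝔸) {s : ℝ} (hs : 0 ≤ s) :
    Summable fun n : ℕ =>
      s ^ (n + 1) / ((n + 1).factorial : ℝ) * ‖(fun M => B * M - M * B)^[n + 1] A‖ := by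
  refine Summable.of_nonneg_of_le (fun n => by positivity)
    (fun n => ?_) ((summable_aux (2 * ‖B‖ * s)).mul_left ‖A‖)
  have h1 : ‖(fun M => B * M - M * B)^[n + 1] A‖ ≤ (2 * ‖B‖) ^ (n + 1) * ‖A‖ :=
    iterate_comm_norm_le B A (n + 1)
  have h2 : (0:ℝ) < ((n + 1).factorial : ℝ) := by positivity
  rw [mul_pow, div_eq_mul_inv, div_eq_mul_inv]
  calc s ^ (n + 1) * (((n + 1).factorial : ℝ))⁻¹ * ‖(fun M => B * M - M * B)^[n + 1] A‖
      ≤ s ^ (n + 1) * (((n + 1).factorial : ℝ))⁻¹ * ((2 * ‖B‖) ^ (n + 1) * ‖A‖) := by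
        gcongr
    _ = ‖A‖ * ((2 * ‖B‖) ^ (n + 1) * s ^ (n + 1) * (((n + 1).factorial : ℝ))⁻¹) := by ring

lemma smul_clm_pow_apply (c : ℂ) (T : 𝔸 →L[ℂ] 𝔸) (n : ℕ) (A : 𝔸) :
    ((c • T) ^ n) A = c ^ n • (T ^ n) A := by
  induction n with
  | zero => simp
  | succ n ih =>
    rw [pow_succ', ContinuousLinearMap.mul_apply, ih, ContinuousLinearMap.smul_apply,
      map_smul, smul_smul, ← pow_succ']
    rw [pow_succ' T n, ContinuousLinearMap.mul_apply]

lemma exp_conj_comm_bound (B A : 𝔸) (c : ℂ) :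
    ‖exp (c • B) * A * exp (-(c • B)) - A‖
      ≤ ∑' n : ℕ, ‖c‖ ^ (n + 1) / ((n + 1).factorial : ℝ)
          * ‖(fun M => B * M - M * B)^[n + 1] A‖ := by
  set f : 𝔸 → 𝔸 := fun M => B * M - M * B with hf
  set g : ℕ → 𝔸 := fun n => (n.factorial : ℂ)⁻¹ • c ^ n • f^[n] A with hg
  have hsc : LMul (c • B) - RMul (c • B) = c • (LMul B - RMul B) := by
    ext M
    simp [smul_sub, smul_mul_assoc, mul_smul_comm]
  have key : exp (c • B) * A * exp (-(c • B)) = ∑' n : ℕ, g n := by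
    rw [← exp_ad_apply, exp_clm_apply]
    refine tsum_congr fun n => ?_
    rw [hsc, smul_clm_pow_apply, ad_pow_apply]
  have hnorm : ∀ n : ℕ, ‖g n‖ = ‖c‖ ^ n / (n.factorial : ℝ) * ‖f^[n] A‖ := by
    intro n
    rw [hg]
    simp only [norm_smul, norm_inv, norm_pow, Complex.norm_natCast]
    ring
  have hsummable_norm : Summable fun n : ℕ => ‖g n‖ := by
    refine Summable.of_nonneg_of_le (fun n => norm_nonneg _) (fun n => ?_)
      ((Real.summable_pow_div_factorial (‖c‖ * (2 * ‖B‖))).mul_left ‖A‖)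
    rw [hnorm n]
    have h1 : ‖f^[n] A‖ ≤ (2 * ‖B‖) ^ n * ‖A‖ := iterate_comm_norm_le B A n
    calc ‖c‖ ^ n / (n.factorial : ℝ) * ‖f^[n] A‖
        ≤ ‖c‖ ^ n / (n.factorial : ℝ) * ((2 * ‖B‖) ^ n * ‖A‖) := by
          gcongr
      _ = ‖A‖ * ((‖c‖ * (2 * ‖B‖)) ^ n / (n.factorial : ℝ)) := by
          rw [mul_pow]; ring
  have hsum : Summable g := hsummable_norm.of_norm
  have hg0 : g 0 = A := by simp [hg]
  rw [key, hsum.tsum_eq_zero_add, hg0, add_sub_cancel_left]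
  have hshift : Summable fun n : ℕ => ‖g (n + 1)‖ :=
    hsummable_norm.comp_injective (add_left_injective 1)
  calc ‖∑' n : ℕ, g (n + 1)‖ ≤ ∑' n : ℕ, ‖g (n + 1)‖ := norm_tsum_le_tsum_norm hshift
    _ = ∑' n : ℕ, ‖c‖ ^ (n + 1) / ((n + 1).factorial : ℝ) * ‖f^[n + 1] A‖ :=
        tsum_congr fun n => hnorm (n + 1)

end AlgebraLemmas

section Hilbert

variable {E : Type*} [NormedAddCommGroup E] [InnerProductSpace ℂ E] [CompleteSpace E]

lemma norm_exp_skew_le (S : E →L[ℂ] E) (hS : star S = -S) : ‖exp S‖ ≤ 1 := by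
  have h1 : star (exp S) * exp S = 1 := by
    rw [star_exp, hS, ← exp_add_of_commute_C (Commute.neg_left (Commute.refl S))]
    simp
  refine ContinuousLinearMap.opNorm_le_bound _ zero_le_one fun x => ?_
  rw [one_mul]
  have h2 : (inner ℂ (exp S x) (exp S x) : ℂ) = inner ℂ x x := by
    have h3 := ContinuousLinearMap.adjoint_inner_left (exp S) x (exp S x)
    rw [← ContinuousLinearMap.star_eq_adjoint] at h3
    have h4 : star (exp S) (exp S x) = x := by
      have := congrArg (fun T => T x) h1
      simpa [ContinuousLinearMap.mul_apply] using this
    rw [h4] at h3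
    exact h3.symm
  have h6 : ‖exp S x‖ ^ 2 = ‖x‖ ^ 2 := by
    rw [← inner_self_eq_norm_sq (𝕜 := ℂ), ← inner_self_eq_norm_sq (𝕜 := ℂ), h2]
  nlinarith [norm_nonneg (exp S x), norm_nonneg x]

end Hilbert



lemma trotter_key {E : Type*} [NormedAddCommGroup E] [InnerProductSpace ℂ E]
    [CompleteSpace E] (A B : E →L[ℂ] E) (hA : IsSelfAdjoint A) (hB : IsSelfAdjoint B)
    (t : ℝ) (ht : 0 ≤ t) :
    ‖exp (t • ((-Complex.I) • (A + B)))
        - exp (t • ((-Complex.I) • B)) * exp (t • ((-Complex.I) • A))‖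
      ≤ (∑' n : ℕ, t ^ (n + 1) / ((n + 1).factorial : ℝ)
          * ‖(fun M => B * M - M * B)^[n + 1] A‖) * t := by
  set C : ℝ := ∑' n : ℕ, t ^ (n + 1) / ((n + 1).factorial : ℝ)
      * ‖(fun M => B * M - M * B)^[n + 1] A‖ with hCdef
  set M1 : E →L[ℂ] E := Complex.I • (A + B) with hM1def
  set M2 : E →L[ℂ] E := (-Complex.I) • B with hM2def
  set M3 : E →L[ℂ] E := (-Complex.I) • A with hM3def
  have hexpR : (exp : (E →L[ℂ] E) → (E →L[ℂ] E)) = exp := rfl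
  have hd : ∀ (M : E →L[ℂ] E) (s : ℝ),
      HasDerivAt (fun u : ℝ => exp (u • M)) (exp (s • M) * M) s := by
    intro M s
    have h := hasDerivAt_exp_smul_const (𝕂 := ℝ) M s
    simpa only [hexpR] using h
  have hsmul : ∀ (s : ℝ) (c : ℂ) (X : E →L[ℂ] E), s • (c • X) = ((s : ℂ) * c) • X := by
    intro s c X
    rw [← smul_assoc]
    congr 1
  have hskew : ∀ (c : ℂ), (starRingEnd ℂ) c = -c →
      ∀ (X : E →L[ℂ] E), IsSelfAdjoint X → ‖exp (c • X)‖ ≤ 1 := by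
    intro c hc X hX
    refine norm_exp_skew_le _ ?_
    rw [star_smul, hX.star_eq, Complex.star_def, hc, neg_smul]
  have hAB : IsSelfAdjoint (A + B) := hA.add hB
  have hcI : ∀ s : ℝ, (starRingEnd ℂ) ((s : ℂ) * Complex.I) = -((s : ℂ) * Complex.I) := by
    intro s
    simp [map_mul, Complex.conj_ofReal, Complex.conj_I, mul_neg]
  have hcmI : ∀ s : ℝ, (starRingEnd ℂ) ((s : ℂ) * -Complex.I) = -((s : ℂ) * -Complex.I) := by
    intro s
    simp [map_mul, Complex.conj_ofReal, Complex.conj_I, mul_neg]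
  have hn1 : ∀ s : ℝ, ‖exp (s • M1)‖ ≤ 1 := by
    intro s
    rw [hM1def, hsmul s Complex.I (A + B)]
    exact hskew _ (hcI s) _ hAB
  have hn2 : ∀ s : ℝ, ‖exp (s • M2)‖ ≤ 1 := by
    intro s
    rw [hM2def, hsmul s (-Complex.I) B]
    exact hskew _ (hcmI s) _ hB
  have hn3 : ∀ s : ℝ, ‖exp (s • M3)‖ ≤ 1 := by
    intro s
    rw [hM3def, hsmul s (-Complex.I) A]
    exact hskew _ (hcmI s) _ hA
  have hnU : ‖exp (t • (-M1))‖ ≤ 1 := by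
    have h1 : -M1 = (-Complex.I) • (A + B) := by rw [hM1def, neg_smul]
    rw [h1, hsmul t (-Complex.I) (A + B)]
    exact hskew _ (hcmI t) _ hAB
  have hM1eq : M1 = -M2 - M3 := by
    rw [hM1def, hM2def, hM3def]
    module
  have hG' : ∀ s : ℝ,
      HasDerivAt (fun u : ℝ => exp (u • M1) * (exp (u • M2) * exp (u • M3)))
        (exp (s • M1) *
          ((exp (s • M2) * M3 - M3 * exp (s • M2)) * exp (s • M3))) s := by
    intro s
    have h := (hd M1 s).mul ((hd M2 s).mul (hd M3 s))
    have c2 : Commute M2 (exp (s • M2)) := ((Commute.refl M2).smul_right s).exp_right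
    have c3 : Commute M3 (exp (s • M3)) := ((Commute.refl M3).smul_right s).exp_right
    have habs : ∀ e1 e2 e3 : E →L[ℂ] E, e2 * M2 = M2 * e2 → e3 * M3 = M3 * e3 →
        e1 * ((e2 * M3 - M3 * e2) * e3)
          = (e1 * M1) * (e2 * e3) + e1 * ((e2 * M2) * e3 + e2 * (e3 * M3)) := by
      intro e1 e2 e3 h2' h3'
      rw [h2', h3', hM1eq]
      noncomm_ring
    have hDs := habs (exp (s • M1)) (exp (s • M2)) (exp (s • M3))
      c2.symm.eq c3.symm.eq
    rw [hDs]
    exact h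
  have hbound : ∀ s ∈ Set.Icc (0 : ℝ) t,
      ‖exp (s • M1) *
        ((exp (s • M2) * M3 - M3 * exp (s • M2)) * exp (s • M3))‖ ≤ C := by
    intro s hs
    obtain ⟨hs0, hst⟩ := hs
    have hinv : exp (-(s • M2)) * exp (s • M2) = 1 := by
      rw [← exp_add_of_commute_C (Commute.neg_left (Commute.refl (s • M2)))]
      simp
    have hconj : exp (s • M2) * A - A * exp (s • M2)
        = (exp (s • M2) * A * exp (-(s • M2)) - A) * exp (s • M2) := by
      rw [sub_mul, mul_assoc (exp (s • M2) * A), hinv, mul_one]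
    have hccomm : ‖exp (s • M2) * A * exp (-(s • M2)) - A‖
        ≤ ∑' n : ℕ, s ^ (n + 1) / ((n + 1).factorial : ℝ)
            * ‖(fun M => B * M - M * B)^[n + 1] A‖ := by
      have hc := exp_conj_comm_bound B A ((s : ℂ) * -Complex.I)
      rw [← hsmul s (-Complex.I) B, ← hM2def] at hc
      have hnc : ‖(s : ℂ) * -Complex.I‖ = s := by
        simp [abs_of_nonneg hs0]
      rw [hnc] at hc
      exact hc
    have hsum_s := summable_comm_series B A hs0
    have hsum_t := summable_comm_series B A ht
    have htsum : (∑' n : ℕ, s ^ (n + 1) / ((n + 1).factorial : ℝ)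
          * ‖(fun M => B * M - M * B)^[n + 1] A‖) ≤ C := by
      rw [hCdef]
      refine Summable.tsum_le_tsum (fun n => ?_) hsum_s hsum_t
      gcongr
    have hY : exp (s • M2) * M3 - M3 * exp (s • M2)
        = (-Complex.I) • (exp (s • M2) * A - A * exp (s • M2)) := by
      rw [hM3def, mul_smul_comm, smul_mul_assoc, smul_sub]
    calc ‖exp (s • M1) *
          ((exp (s • M2) * M3 - M3 * exp (s • M2)) * exp (s • M3))‖
        ≤ ‖exp (s • M1)‖
          * ‖(exp (s • M2) * M3 - M3 * exp (s • M2)) * exp (s • M3)‖ :=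
          norm_mul_le _ _
      _ ≤ 1 * ‖(exp (s • M2) * M3 - M3 * exp (s • M2)) * exp (s • M3)‖ :=
          mul_le_mul_of_nonneg_right (hn1 s) (norm_nonneg _)
      _ = ‖(exp (s • M2) * M3 - M3 * exp (s • M2)) * exp (s • M3)‖ := one_mul _
      _ ≤ ‖exp (s • M2) * M3 - M3 * exp (s • M2)‖ * ‖exp (s • M3)‖ :=
          norm_mul_le _ _
      _ ≤ ‖exp (s • M2) * M3 - M3 * exp (s • M2)‖ * 1 :=
          mul_le_mul_of_nonneg_left (hn3 s) (norm_nonneg _)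
      _ = ‖exp (s • M2) * M3 - M3 * exp (s • M2)‖ := mul_one _
      _ = ‖exp (s • M2) * A - A * exp (s • M2)‖ := by
          rw [hY, norm_smul]
          simp
      _ = ‖(exp (s • M2) * A * exp (-(s • M2)) - A) * exp (s • M2)‖ := by
          rw [hconj]
      _ ≤ ‖exp (s • M2) * A * exp (-(s • M2)) - A‖ * ‖exp (s • M2)‖ :=
          norm_mul_le _ _
      _ ≤ ‖exp (s • M2) * A * exp (-(s • M2)) - A‖ * 1 :=
          mul_le_mul_of_nonneg_left (hn2 s) (norm_nonneg _)
      _ = ‖exp (s • M2) * A * exp (-(s • M2)) - A‖ := mul_one _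
      _ ≤ ∑' n : ℕ, s ^ (n + 1) / ((n + 1).factorial : ℝ)
            * ‖(fun M => B * M - M * B)^[n + 1] A‖ := hccomm
      _ ≤ C := htsum
  have hmvt := Convex.norm_image_sub_le_of_norm_hasDerivWithin_le
    (f := fun u : ℝ => exp (u • M1) * (exp (u • M2) * exp (u • M3)))
    (f' := fun s : ℝ => exp (s • M1) *
      ((exp (s • M2) * M3 - M3 * exp (s • M2)) * exp (s • M3)))
    (s := Set.Icc (0 : ℝ) t)
    (fun s _ => (hG' s).hasDerivWithinAt) hbound (convex_Icc 0 t)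
    (Set.left_mem_Icc.mpr ht) (Set.right_mem_Icc.mpr ht)
  have hG0 : exp ((0 : ℝ) • M1) * (exp ((0 : ℝ) • M2) * exp ((0 : ℝ) • M3)) = 1 := by
    simp only [zero_smul, exp_zero, one_mul]
  have hGt : ‖exp (t • M1) * (exp (t • M2) * exp (t • M3)) - 1‖ ≤ C * t := by
    have h := hmvt
    simp only [hG0] at h
    simpa [Real.norm_eq_abs, abs_of_nonneg ht] using h
  have hUinv : exp (t • (-M1)) * exp (t • M1) = 1 := by
    rw [smul_neg, ← exp_add_of_commute_C (Commute.neg_left (Commute.refl (t • M1)))]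
    simp
  have hfact : exp (t • (-M1)) - exp (t • M2) * exp (t • M3)
      = exp (t • (-M1)) * (1 - exp (t • M1) * (exp (t • M2) * exp (t • M3))) := by
    rw [mul_sub, mul_one, ← mul_assoc, hUinv, one_mul]
  have hneg : (t : ℝ) • ((-Complex.I) • (A + B)) = t • (-M1) := by
    rw [hM1def, neg_smul]
  calc ‖exp (t • ((-Complex.I) • (A + B)))
        - exp (t • M2) * exp (t • M3)‖
      = ‖exp (t • (-M1))
          * (1 - exp (t • M1) * (exp (t • M2) * exp (t • M3)))‖ := by
        rw [hneg, hfact]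
    _ ≤ ‖exp (t • (-M1))‖
          * ‖1 - exp (t • M1) * (exp (t • M2) * exp (t • M3))‖ := norm_mul_le _ _
    _ ≤ 1 * ‖1 - exp (t • M1) * (exp (t • M2) * exp (t • M3))‖ :=
          mul_le_mul_of_nonneg_right hnU (norm_nonneg _)
    _ = ‖exp (t • M1) * (exp (t • M2) * exp (t • M3)) - 1‖ := by
          rw [one_mul, norm_sub_rev]
    _ ≤ C * t := hGt

/-- For Hermitian `A, B` and `t ≥ 0`,
`‖e^{−i(A+B)t} − e^{−iBt} e^{−iAt}‖ ≤ Σ_{k≥1} (t^{k+1}/k!)·‖ad_B^k(A)‖`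
(the sum is reindexed so that `k+1` plays the role of `k`). -/
theorem trotter_commutator_bound {E : Type*} [NormedAddCommGroup E]
    [InnerProductSpace ℂ E] [FiniteDimensional ℂ E]
    (A B : E →L[ℂ] E) (hA : IsSelfAdjoint A) (hB : IsSelfAdjoint B)
    (t : ℝ) (ht : 0 ≤ t) :
    ‖exp ((-(Complex.I * t)) • (A + B))
        - exp ((-(Complex.I * t)) • B) * exp ((-(Complex.I * t)) • A)‖
      ≤ ∑' k : ℕ, t ^ (k + 2) / (Nat.factorial (k + 1) : ℝ) * ‖(fun M => B * M - M * B)^[k + 1] A‖ := by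
  haveI : CompleteSpace E := FiniteDimensional.complete ℂ E
  have hs : ∀ X : E →L[ℂ] E, (-(Complex.I * (t : ℂ))) • X = t • ((-Complex.I) • X) := by
    intro X
    rw [← smul_assoc]
    congr 1
    rw [Complex.real_smul]
    ring
  rw [hs (A + B), hs B, hs A]
  refine (trotter_key A B hA hB t ht).trans_eq ?_
  rw [← tsum_mul_right]
  exact tsum_congr fun n => by ring
end

section
/- Let H = A + B where A = Σ_j H_j^{(1)} and B = Σ_j H_j^{(2)} with each H_j a Hermitian operator acting on at most two qubits and ‖H_j‖ ≤ 1, each qubit involved in at most d' terms, and h_B = Σ_j ‖H_j^{(2)}‖. Then for every k ≥ 1, ‖ad_B^k(A)‖ ≤ 2^{k+1} d' h_B^k. -/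
open scoped Matrix.Norms.L2Operator

/-- `M` acts (at most) on the qubits in `S`: its entries vanish unless the
configurations agree outside `S`, and they depend only on the restriction to `S`. -/
def ActsOn {N : ℕ} (S : Finset (Fin N)) (M : Matrix (Fin N → Fin 2) (Fin N → Fin 2) ℂ) : Prop :=
  (∀ x y, M x y ≠ 0 → ∀ i ∉ S, x i = y i) ∧
  (∀ x y x' y', (∀ i ∈ S, x i = x' i) → (∀ i ∈ S, y i = y' i) →
    (∀ i ∉ S, x i = y i) → (∀ i ∉ S, x' i = y' i) → M x y = M x' y')
lemma actsOn_comm {N : ℕ} {S T : Finset (Fin N)}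
    {M P : Matrix (Fin N → Fin 2) (Fin N → Fin 2) ℂ}
    (hM : ActsOn S M) (hP : ActsOn T P) (hST : Disjoint S T) :
    M * P = P * M := by
  have hSnT : ∀ i, i ∈ S → i ∉ T := fun i hi => Finset.disjoint_left.mp hST hi
  have hTnS : ∀ i, i ∈ T → i ∉ S := fun i hi => Finset.disjoint_right.mp hST hi
  ext x y
  simp only [Matrix.mul_apply]
  set z₀ : Fin N → Fin 2 := fun i => if i ∈ S then y i else x i with hz₀
  set w₀ : Fin N → Fin 2 := fun i => if i ∈ T then y i else x i with hw₀
  have hL : ∑ z, M x z * P z y = M x z₀ * P z₀ y := by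
    apply Finset.sum_eq_single z₀
    · intro z _ hz
      by_contra h
      have hMz : M x z ≠ 0 := fun h0 => h (by simp [h0])
      have hPz : P z y ≠ 0 := fun h0 => h (by simp [h0])
      have h1 := hM.1 x z hMz
      have h2 := hP.1 z y hPz
      apply hz; funext i
      by_cases hiS : i ∈ S
      · simp only [hz₀, hiS, if_pos]; exact h2 i (hSnT i hiS)
      · simp only [hz₀, hiS, if_neg, not_false_iff]; exact (h1 i hiS).symm
    · intro h; exact absurd (Finset.mem_univ z₀) h
  have hR : ∑ z, P x z * M z y = P x w₀ * M w₀ y := by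
    apply Finset.sum_eq_single w₀
    · intro z _ hz
      by_contra h
      have hPz : P x z ≠ 0 := fun h0 => h (by simp [h0])
      have hMz : M z y ≠ 0 := fun h0 => h (by simp [h0])
      have h1 := hP.1 x z hPz
      have h2 := hM.1 z y hMz
      apply hz; funext i
      by_cases hiT : i ∈ T
      · simp only [hw₀, hiT, if_pos]; exact h2 i (hTnS i hiT)
      · simp only [hw₀, hiT, if_neg, not_false_iff]; exact (h1 i hiT).symm
    · intro h; exact absurd (Finset.mem_univ w₀) h
  rw [hL, hR]
  by_cases hagree : ∀ i, i ∉ S → i ∉ T → x i = y i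
  · have e1 : M x z₀ = M w₀ y := by
      apply hM.2
      · intro i hi; simp [hw₀, hSnT i hi]
      · intro i hi; simp [hz₀, hi]
      · intro i hi; simp [hz₀, hi]
      · intro i hi
        by_cases hiT : i ∈ T
        · simp [hw₀, hiT]
        · simp [hw₀, hiT, hagree i hi hiT]
    have e2 : P z₀ y = P x w₀ := by
      apply hP.2
      · intro i hi; simp [hz₀, hTnS i hi]
      · intro i hi; simp [hw₀, hi]
      · intro i hi
        by_cases hiS : i ∈ S
        · simp [hz₀, hiS]
        · simp [hz₀, hiS, hagree i hiS hi]
      · intro i hi; simp [hw₀, hi]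
    rw [e1, e2]; ring
  · push_neg at hagree
    obtain ⟨i₀, hiS, hiT, hne⟩ := hagree
    have hP0 : P z₀ y = 0 := by
      by_contra h
      exact hne (by simpa [hz₀, hiS] using hP.1 z₀ y h i₀ hiT)
    have hM0 : M w₀ y = 0 := by
      by_contra h
      exact hne (by simpa [hw₀, hiT] using hM.1 w₀ y h i₀ hiS)
    rw [hP0, hM0]; ring
/-- If `A = Σ_j H¹_j` (intra-party terms) and `B = Σ_j H²_j` (inter-party terms)
are sums of Hermitian one- or two-qubit terms of norm at most 1, each qubit is
involved in at most `d'` terms, and `h_B = Σ_j ‖H²_j‖`, then for every `k ≥ 1`,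
`‖ad_B^k(A)‖ ≤ 2^{k+1} d' h_B^k`. -/
theorem ad_pow_norm_bound {N : ℕ} (d' : ℕ)
    {ι₁ ι₂ : Type*} [Fintype ι₁] [Fintype ι₂]
    (H1 : ι₁ → Matrix (Fin N → Fin 2) (Fin N → Fin 2) ℂ)
    (H2 : ι₂ → Matrix (Fin N → Fin 2) (Fin N → Fin 2) ℂ)
    (S1 : ι₁ → Finset (Fin N)) (S2 : ι₂ → Finset (Fin N))
    (h1herm : ∀ j, (H1 j).IsHermitian) (h2herm : ∀ j, (H2 j).IsHermitian)
    (h1act : ∀ j, ActsOn (S1 j) (H1 j)) (h2act : ∀ j, ActsOn (S2 j) (H2 j))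
    (h1card : ∀ j, (S1 j).card ≤ 2) (h2card : ∀ j, (S2 j).card ≤ 2)
    (h1norm : ∀ j, ‖H1 j‖ ≤ 1) (h2norm : ∀ j, ‖H2 j‖ ≤ 1)
    (hdeg : ∀ q : Fin N,
      (Finset.univ.filter fun j => q ∈ S1 j).card
        + (Finset.univ.filter fun j => q ∈ S2 j).card ≤ d')
    (A B : Matrix (Fin N → Fin 2) (Fin N → Fin 2) ℂ)
    (hA : A = ∑ j, H1 j) (hB : B = ∑ j, H2 j)
    (hb : ℝ) (hhb : hb = ∑ j, ‖H2 j‖)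
    (k : ℕ) (hk : 1 ≤ k) :
    ‖(fun M => B * M - M * B)^[k] A‖ ≤ 2 ^ (k + 1) * d' * hb ^ k := by
  classical
  set f : Matrix (Fin N → Fin 2) (Fin N → Fin 2) ℂ → Matrix (Fin N → Fin 2) (Fin N → Fin 2) ℂ :=
    fun M => B * M - M * B with hf
  have hbnn : 0 ≤ hb := hhb ▸ Finset.sum_nonneg fun j _ => norm_nonneg _
  have hBnorm : ‖B‖ ≤ hb := by
    rw [hB, hhb]; exact norm_sum_le _ _
  have step : ∀ M, ‖f M‖ ≤ 2 * hb * ‖M‖ := by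
    intro M
    calc ‖B * M - M * B‖ ≤ ‖B * M‖ + ‖M * B‖ := norm_sub_le _ _
      _ ≤ ‖B‖ * ‖M‖ + ‖M‖ * ‖B‖ := add_le_add (norm_mul_le _ _) (norm_mul_le _ _)
      _ = 2 * ‖B‖ * ‖M‖ := by ring
      _ ≤ 2 * hb * ‖M‖ := by
          apply mul_le_mul_of_nonneg_right _ (norm_nonneg M)
          linarith
  -- base case bound : ‖f A‖ ≤ 4 * d' * hb
  have base : ‖f A‖ ≤ 4 * d' * hb := by
    have hfA : f A = ∑ j', (H2 j' * A - A * H2 j') := by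
      simp only [hf, hB, Finset.sum_mul, Finset.mul_sum, Finset.sum_sub_distrib]
    have hterm : ∀ j', ‖H2 j' * A - A * H2 j'‖ ≤ 2 * ‖H2 j'‖ * (2 * d') := by
      intro j'
      set J : Finset ι₁ := Finset.univ.filter fun j => ¬ Disjoint (S1 j) (S2 j') with hJ
      have hJcard : (J : Finset ι₁).card ≤ 2 * d' := by
        have hsub : J ⊆ (S2 j').biUnion fun q => Finset.univ.filter fun j => q ∈ S1 j := by
          intro j hj
          simp only [hJ, Finset.mem_filter, Finset.mem_univ, true_and] at hj
          obtain ⟨q, hq1, hq2⟩ := Finset.not_disjoint_iff.mp hj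
          exact Finset.mem_biUnion.mpr ⟨q, hq2, by simp [hq1]⟩
        calc J.card ≤ _ := Finset.card_le_card hsub
          _ ≤ ∑ q ∈ S2 j', (Finset.univ.filter fun j => q ∈ S1 j).card :=
            Finset.card_biUnion_le
          _ ≤ ∑ _q ∈ S2 j', d' := Finset.sum_le_sum fun q _ =>
            le_trans (Nat.le_add_right _ _) (hdeg q)
          _ = (S2 j').card * d' := by rw [Finset.sum_const, smul_eq_mul]
          _ ≤ 2 * d' := Nat.mul_le_mul_right _ (h2card j')
      set AJ : Matrix (Fin N → Fin 2) (Fin N → Fin 2) ℂ := ∑ j ∈ J, H1 j with hAJ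
      have hcomm : H2 j' * A - A * H2 j' = H2 j' * AJ - AJ * H2 j' := by
        have hAsplit : A = AJ + ∑ j ∈ Jᶜ, H1 j := by
          rw [hA, hAJ, Finset.sum_add_sum_compl]
        have hrest : H2 j' * (∑ j ∈ Jᶜ, H1 j) = (∑ j ∈ Jᶜ, H1 j) * H2 j' := by
          rw [Finset.mul_sum, Finset.sum_mul]
          apply Finset.sum_congr rfl
          intro j hj
          simp only [hJ, Finset.mem_compl, Finset.mem_filter, Finset.mem_univ, true_and,
            not_not] at hj
          exact actsOn_comm (h2act j') (h1act j) hj.symm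
        rw [hAsplit, mul_add, add_mul, hrest]; abel
      have hAJnorm : ‖AJ‖ ≤ 2 * d' := by
        calc ‖AJ‖ ≤ ∑ j ∈ J, ‖H1 j‖ := norm_sum_le _ _
          _ ≤ ∑ _j ∈ J, 1 := Finset.sum_le_sum fun j _ => h1norm j
          _ = J.card := by simp
          _ ≤ ((2 * d' : ℕ) : ℝ) := Nat.cast_le.mpr hJcard
          _ = 2 * d' := by push_cast; ring
      calc ‖H2 j' * A - A * H2 j'‖ = ‖H2 j' * AJ - AJ * H2 j'‖ := by rw [hcomm]
        _ ≤ ‖H2 j' * AJ‖ + ‖AJ * H2 j'‖ := norm_sub_le _ _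
        _ ≤ ‖H2 j'‖ * ‖AJ‖ + ‖AJ‖ * ‖H2 j'‖ := add_le_add (norm_mul_le _ _) (norm_mul_le _ _)
        _ = 2 * ‖H2 j'‖ * ‖AJ‖ := by ring
        _ ≤ 2 * ‖H2 j'‖ * (2 * d') := by
            apply mul_le_mul_of_nonneg_left hAJnorm
            positivity
    calc ‖f A‖ = ‖∑ j', (H2 j' * A - A * H2 j')‖ := by rw [hfA]
      _ ≤ ∑ j', ‖H2 j' * A - A * H2 j'‖ := norm_sum_le _ _
      _ ≤ ∑ j', 2 * ‖H2 j'‖ * (2 * d') := Finset.sum_le_sum fun j' _ => hterm j'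
      _ = 4 * d' * ∑ j', ‖H2 j'‖ := by rw [← Finset.sum_mul, ← Finset.mul_sum]; ring
      _ = 4 * d' * hb := by rw [hhb]
  have iter : ∀ m (C : Matrix (Fin N → Fin 2) (Fin N → Fin 2) ℂ),
      ‖f^[m] C‖ ≤ (2 * hb) ^ m * ‖C‖ := by
    intro m
    induction m with
    | zero => intro C; simp
    | succ n ih =>
      intro C
      rw [Function.iterate_succ_apply]
      calc ‖f^[n] (f C)‖ ≤ (2 * hb) ^ n * ‖f C‖ := ih (f C)
        _ ≤ (2 * hb) ^ n * (2 * hb * ‖C‖) := by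
            apply mul_le_mul_of_nonneg_left (step C)
            positivity
        _ = (2 * hb) ^ (n + 1) * ‖C‖ := by ring
  obtain ⟨m, rfl⟩ : ∃ m, k = m + 1 := ⟨k - 1, (Nat.succ_pred_eq_of_pos hk).symm⟩
  calc ‖f^[m + 1] A‖ = ‖f^[m] (f A)‖ := by rw [Function.iterate_succ_apply]
    _ ≤ (2 * hb) ^ m * ‖f A‖ := iter m (f A)
    _ ≤ (2 * hb) ^ m * (4 * d' * hb) := by
        apply mul_le_mul_of_nonneg_left base
        positivity
    _ = 2 ^ (m + 1 + 1) * d' * hb ^ (m + 1) := by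
        rw [mul_pow]; ring
end

section
/- Under the same setting (H = A + B as a sum of bounded local terms, each qubit in at most d' terms, total inter-party strength h_B), for any ε with 0 < ε ≤ d't and any integer m ≥ ⌈4 d' h_B t² / ε⌉, ‖e^{−i(A+B)t} − (e^{−iBt/m} e^{−iAt/m})^m‖ ≤ 2ε. -/
open scoped Matrix.Norms.L2Operator
open NormedSpace

lemma ActsOn.commute' {N : ℕ} {S T : Finset (Fin N)}
    {M M' : Matrix (Fin N → Fin 2) (Fin N → Fin 2) ℂ}
    (hM : ActsOn S M) (hM' : ActsOn T M') (hST : Disjoint S T) : M * M' = M' * M := by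
  obtain ⟨hM1, hM2⟩ := hM
  obtain ⟨hM'1, hM'2⟩ := hM'
  ext x y
  rw [Matrix.mul_apply, Matrix.mul_apply]
  set z₀ : Fin N → Fin 2 := fun i => if i ∈ S then y i else x i with hz₀
  set w₀ : Fin N → Fin 2 := fun i => if i ∈ T then y i else x i with hw₀
  have hST' : ∀ i, i ∈ S → i ∉ T := fun i hiS hiT => (Finset.disjoint_left.mp hST hiS) hiT
  have hTS' : ∀ i, i ∈ T → i ∉ S := fun i hiT hiS => (Finset.disjoint_left.mp hST hiS) hiT
  have e1 : ∑ z, M x z * M' z y = M x z₀ * M' z₀ y := by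
    refine Finset.sum_eq_single_of_mem z₀ (Finset.mem_univ _) ?_
    intro z _ hz
    by_contra h
    rcases mul_ne_zero_iff.mp h with ⟨h1, h2⟩
    apply hz
    funext i
    by_cases hiS : i ∈ S
    · have := hM'1 z y h2 i (hST' i hiS)
      simp [hz₀, hiS, this]
    · have := hM1 x z h1 i hiS
      simp [hz₀, hiS, ← this]
  have e2 : ∑ z, M' x z * M z y = M' x w₀ * M w₀ y := by
    refine Finset.sum_eq_single_of_mem w₀ (Finset.mem_univ _) ?_
    intro z _ hz
    by_contra h
    rcases mul_ne_zero_iff.mp h with ⟨h1, h2⟩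
    apply hz
    funext i
    by_cases hiT : i ∈ T
    · have := hM1 z y h2 i (hTS' i hiT)
      simp [hw₀, hiT, this]
    · have := hM'1 x z h1 i hiT
      simp [hw₀, hiT, ← this]
  rw [e1, e2]
  by_cases hxy : ∀ i, i ∉ S → i ∉ T → x i = y i
  · have hMeq : M x z₀ = M w₀ y := by
      apply hM2 x z₀ w₀ y
      · intro i hi; simp [hw₀, hST' i hi]
      · intro i hi; simp [hz₀, hi]
      · intro i hi; simp [hz₀, hi]
      · intro i hi
        by_cases hiT : i ∈ T
        · simp [hw₀, hiT]
        · simp [hw₀, hiT, hxy i hi hiT]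
    have hM'eq : M' z₀ y = M' x w₀ := by
      refine hM'2 z₀ y x w₀ ?_ ?_ ?_ ?_
      · intro i hi; simp [hz₀, hTS' i hi]
      · intro i hi; simp [hw₀, hi]
      · intro i hi
        by_cases hiS : i ∈ S
        · simp [hz₀, hiS]
        · simp [hz₀, hiS, hxy i hiS hi]
      · intro i hi; simp [hw₀, hi]
    rw [hMeq, hM'eq, mul_comm]
  · push_neg at hxy
    obtain ⟨i, hiS, hiT, hne⟩ := hxy
    have l1 : M' z₀ y = 0 := by
      by_contra h
      have := hM'1 z₀ y h i hiT
      simp [hz₀, hiS] at this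
      exact hne this
    have l2 : M w₀ y = 0 := by
      by_contra h
      have := hM1 w₀ y h i hiS
      simp [hw₀, hiT] at this
      exact hne this
    rw [l1, l2, mul_zero, mul_zero]

variable {N : ℕ}

lemma hasDerivAt_expC (M : Matrix (Fin N → Fin 2) (Fin N → Fin 2) ℂ) (s : ℝ) :
    HasDerivAt (fun u : ℝ => exp (u • M)) (M * exp (s • M)) s := by
  have := hasDerivAt_exp_smul_const' (𝕂 := ℝ) M s
  simpa using this

lemma smul_rw (r : ℝ) (M : Matrix (Fin N → Fin 2) (Fin N → Fin 2) ℂ) :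
    (-(Complex.I * (r : ℂ))) • M = r • ((-Complex.I) • M) := by
  have h : (-(Complex.I * (r : ℂ))) = (r : ℝ) • (-Complex.I) := by
    simp [Complex.real_smul]; ring
  rw [h, smul_assoc]

lemma norm_exp_skew (c : ℂ) (hc : star c = -c)
    (M : Matrix (Fin N → Fin 2) (Fin N → Fin 2) ℂ) (hM : M.IsHermitian) (s : ℝ) :
    ‖exp (s • (c • M))‖ = 1 := by
  have hmem : exp (s • (c • M)) ∈ unitary (Matrix (Fin N → Fin 2) (Fin N → Fin 2) ℂ) := by
    let +nondep : NormedAlgebra ℚ (Matrix (Fin N → Fin 2) (Fin N → Fin 2) ℂ) :=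
      NormedAlgebra.restrictScalars ℚ ℂ _
    apply exp_mem_unitary_of_mem_skewAdjoint
    rw [skewAdjoint.mem_iff]
    have hMs : star M = M := hM
    calc star (s • (c • M)) = s • (star c • star M) := by rw [star_smul, star_smul, star_trivial]
      _ = s • ((-c) • M) := by rw [hc, hMs]
      _ = -(s • (c • M)) := by simp [neg_smul]
  exact CStarRing.norm_of_mem_unitary hmem

lemma aux_pow_norm_le {R : Type*} [NormedRing R] [NormOneClass R] {U : R} (hU : ‖U‖ ≤ 1) :
    ∀ k : ℕ, ‖U ^ k‖ ≤ 1
  | 0 => by simp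
  | (k + 1) => by
    rw [pow_succ]
    calc ‖U ^ k * U‖ ≤ ‖U ^ k‖ * ‖U‖ := norm_mul_le _ _
      _ ≤ 1 * 1 := mul_le_mul (aux_pow_norm_le hU k) hU (norm_nonneg _) zero_le_one
      _ = 1 := mul_one 1

lemma aux_pow_sub {R : Type*} [NormedRing R] [NormOneClass R] {U V : R}
    (hU : ‖U‖ ≤ 1) (hV : ‖V‖ ≤ 1) : ∀ k : ℕ, ‖U ^ k - V ^ k‖ ≤ k * ‖U - V‖
  | 0 => by simp
  | (k + 1) => by
    have h : U ^ (k + 1) - V ^ (k + 1) = U ^ k * (U - V) + (U ^ k - V ^ k) * V := by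
      noncomm_ring
    rw [h]
    have hk : (0:ℝ) ≤ k * ‖U - V‖ := le_trans (norm_nonneg _) (aux_pow_sub hU hV k)
    calc ‖U ^ k * (U - V) + (U ^ k - V ^ k) * V‖
        ≤ ‖U ^ k * (U - V)‖ + ‖(U ^ k - V ^ k) * V‖ := norm_add_le _ _
      _ ≤ ‖U ^ k‖ * ‖U - V‖ + ‖U ^ k - V ^ k‖ * ‖V‖ :=
          add_le_add (norm_mul_le _ _) (norm_mul_le _ _)
      _ ≤ 1 * ‖U - V‖ + (k * ‖U - V‖) * 1 := by
          apply add_le_add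
          · exact mul_le_mul_of_nonneg_right (aux_pow_norm_le hU k) (norm_nonneg _)
          · exact mul_le_mul (aux_pow_sub hU hV k) hV (norm_nonneg _) hk
      _ = (↑(k + 1) : ℝ) * ‖U - V‖ := by push_cast; ring

lemma comm_norm_le {N : ℕ} (d' : ℕ) {ι₁ ι₂ : Type*} [Fintype ι₁] [Fintype ι₂]
    (H1 : ι₁ → Matrix (Fin N → Fin 2) (Fin N → Fin 2) ℂ)
    (H2 : ι₂ → Matrix (Fin N → Fin 2) (Fin N → Fin 2) ℂ)
    (S1 : ι₁ → Finset (Fin N)) (S2 : ι₂ → Finset (Fin N))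
    (h1act : ∀ j, ActsOn (S1 j) (H1 j)) (h2act : ∀ j, ActsOn (S2 j) (H2 j))
    (h2card : ∀ j, (S2 j).card ≤ 2)
    (h1norm : ∀ j, ‖H1 j‖ ≤ 1)
    (hdeg : ∀ q : Fin N,
      (Finset.univ.filter fun j => q ∈ S1 j).card
        + (Finset.univ.filter fun j => q ∈ S2 j).card ≤ d')
    (A B : Matrix (Fin N → Fin 2) (Fin N → Fin 2) ℂ)
    (hA : A = ∑ j, H1 j) (hB : B = ∑ j, H2 j) :
    ‖A * B - B * A‖ ≤ 4 * (d' : ℝ) * ∑ j, ‖H2 j‖ := by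
  classical
  have hsplit : A * B - B * A = ∑ j, (A * H2 j - H2 j * A) := by
    rw [hB, Finset.mul_sum, Finset.sum_mul, ← Finset.sum_sub_distrib]
  have hper : ∀ j, ‖A * H2 j - H2 j * A‖ ≤ 4 * (d' : ℝ) * ‖H2 j‖ := by
    intro j
    set T : Finset ι₁ := Finset.univ.filter (fun k => ¬ Disjoint (S1 k) (S2 j)) with hT
    have hsplit2 : A * H2 j - H2 j * A = ∑ k ∈ T, (H1 k * H2 j - H2 j * H1 k) := by
      rw [hA, Finset.sum_mul, Finset.mul_sum, ← Finset.sum_sub_distrib]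
      refine (Finset.sum_subset (Finset.subset_univ T) ?_).symm
      intro k _ hk
      rw [hT, Finset.mem_filter] at hk
      push_neg at hk
      have hdisj : Disjoint (S1 k) (S2 j) := hk (Finset.mem_univ k)
      rw [ActsOn.commute' (h1act k) (h2act j) hdisj, sub_self]
    have hTcard : T.card ≤ 2 * d' := by
      have hsub : T ⊆ (S2 j).biUnion (fun q => Finset.univ.filter (fun k => q ∈ S1 k)) := by
        intro k hk
        rw [hT, Finset.mem_filter] at hk
        obtain ⟨q, hq1, hq2⟩ := Finset.not_disjoint_iff.mp hk.2
        exact Finset.mem_biUnion.mpr ⟨q, hq2, Finset.mem_filter.mpr ⟨Finset.mem_univ _, hq1⟩⟩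
      calc T.card ≤ ((S2 j).biUnion (fun q => Finset.univ.filter (fun k => q ∈ S1 k))).card :=
            Finset.card_le_card hsub
        _ ≤ ∑ q ∈ S2 j, (Finset.univ.filter (fun k => q ∈ S1 k)).card :=
            Finset.card_biUnion_le
        _ ≤ ∑ _q ∈ S2 j, d' :=
            Finset.sum_le_sum (fun q _ => le_trans (Nat.le_add_right _ _) (hdeg q))
        _ = (S2 j).card * d' := by rw [Finset.sum_const, smul_eq_mul]
        _ ≤ 2 * d' := Nat.mul_le_mul_right _ (h2card j)
    have hterm : ∀ k, ‖H1 k * H2 j - H2 j * H1 k‖ ≤ 2 * ‖H2 j‖ := by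
      intro k
      calc ‖H1 k * H2 j - H2 j * H1 k‖ ≤ ‖H1 k * H2 j‖ + ‖H2 j * H1 k‖ := norm_sub_le _ _
        _ ≤ ‖H1 k‖ * ‖H2 j‖ + ‖H2 j‖ * ‖H1 k‖ := add_le_add (norm_mul_le _ _) (norm_mul_le _ _)
        _ ≤ 1 * ‖H2 j‖ + ‖H2 j‖ * 1 := add_le_add
            (mul_le_mul_of_nonneg_right (h1norm k) (norm_nonneg _))
            (mul_le_mul_of_nonneg_left (h1norm k) (norm_nonneg _))
        _ = 2 * ‖H2 j‖ := by ring
    calc ‖A * H2 j - H2 j * A‖ = ‖∑ k ∈ T, (H1 k * H2 j - H2 j * H1 k)‖ := by rw [hsplit2]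
      _ ≤ ∑ k ∈ T, ‖H1 k * H2 j - H2 j * H1 k‖ := norm_sum_le _ _
      _ ≤ ∑ _k ∈ T, 2 * ‖H2 j‖ := Finset.sum_le_sum (fun k _ => hterm k)
      _ = (T.card : ℝ) * (2 * ‖H2 j‖) := by rw [Finset.sum_const, nsmul_eq_mul]
      _ ≤ (2 * (d' : ℝ)) * (2 * ‖H2 j‖) := by
          apply mul_le_mul_of_nonneg_right _ (by positivity)
          exact_mod_cast Nat.cast_le.mpr hTcard
      _ = 4 * (d' : ℝ) * ‖H2 j‖ := by ring
  calc ‖A * B - B * A‖ = ‖∑ j, (A * H2 j - H2 j * A)‖ := by rw [hsplit]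
    _ ≤ ∑ j, ‖A * H2 j - H2 j * A‖ := norm_sum_le _ _
    _ ≤ ∑ j, 4 * (d' : ℝ) * ‖H2 j‖ := Finset.sum_le_sum (fun j _ => hper j)
    _ = 4 * (d' : ℝ) * ∑ j, ‖H2 j‖ := by rw [← Finset.mul_sum]

lemma step_bound (A B : Matrix (Fin N → Fin 2) (Fin N → Fin 2) ℂ)
    (hAh : A.IsHermitian) (hBh : B.IsHermitian) (δ : ℝ) (hδ : 0 ≤ δ) :
    ‖exp (δ • ((-Complex.I) • (A + B)))
      - exp (δ • ((-Complex.I) • B)) * exp (δ • ((-Complex.I) • A))‖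
      ≤ ‖A * B - B * A‖ * δ * δ := by
  have hABh : (A + B).IsHermitian := hAh.add hBh
  set C : ℝ := ‖A * B - B * A‖ with hCdef
  have hcI : star Complex.I = -Complex.I := by simp [Complex.star_def, Complex.conj_I]
  have hcmI : star (-Complex.I) = -(-Complex.I) := by
    simp [Complex.star_def, Complex.conj_I]
  set P : Matrix (Fin N → Fin 2) (Fin N → Fin 2) ℂ := Complex.I • (A + B) with hPdef
  set Q : Matrix (Fin N → Fin 2) (Fin N → Fin 2) ℂ := (-Complex.I) • B with hQdef
  set R : Matrix (Fin N → Fin 2) (Fin N → Fin 2) ℂ := (-Complex.I) • A with hRdef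
  have nP : ∀ s : ℝ, ‖exp (s • P)‖ = 1 := fun s => norm_exp_skew _ hcI _ hABh s
  have nQ : ∀ s : ℝ, ‖exp (s • Q)‖ = 1 := fun s => norm_exp_skew _ hcmI _ hBh s
  have nR : ∀ s : ℝ, ‖exp (s • R)‖ = 1 := fun s => norm_exp_skew _ hcmI _ hAh s
  have hnQ : -Q = Complex.I • B := by simp [hQdef, neg_smul]
  have nQ' : ∀ s : ℝ, ‖exp (s • (-Q))‖ = 1 := by
    intro s; rw [hnQ]; exact norm_exp_skew _ hcI _ hBh s
  -- the conjugated operator W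
  set W : ℝ → Matrix (Fin N → Fin 2) (Fin N → Fin 2) ℂ :=
    fun s => exp (s • Q) * (R * exp (s • (-Q))) with hWdef
  set W' : ℝ → Matrix (Fin N → Fin 2) (Fin N → Fin 2) ℂ :=
    fun s => exp (s • Q) * ((Q * R - R * Q) * exp (s • (-Q))) with hW'def
  have hQR : Q * R - R * Q = A * B - B * A := by
    simp only [hQdef, hRdef, smul_mul_assoc, mul_smul_comm, smul_smul, neg_mul_neg,
      Complex.I_mul_I]
    simp only [neg_smul, one_smul]
    abel
  have hWd : ∀ s : ℝ, HasDerivAt W (W' s) s := by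
    intro s
    have h : HasDerivAt W _ s := (hasDerivAt_expC Q s).mul (HasDerivAt.const_mul R (hasDerivAt_expC (-Q) s))
    convert h using 1
    have hc : Q * exp (s • Q) = exp (s • Q) * Q :=
      (((Commute.refl Q).smul_right s).exp_right).eq
    rw [hW'def]
    dsimp only
    rw [hc]
    noncomm_ring
  have hW'bound : ∀ s : ℝ, ‖W' s‖ ≤ C := by
    intro s
    calc ‖W' s‖ ≤ ‖exp (s • Q)‖ * ‖(Q * R - R * Q) * exp (s • (-Q))‖ := norm_mul_le _ _
      _ ≤ ‖exp (s • Q)‖ * (‖Q * R - R * Q‖ * ‖exp (s • (-Q))‖) := by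
          apply mul_le_mul_of_nonneg_left (norm_mul_le _ _) (norm_nonneg _)
      _ = C := by rw [nQ s, nQ' s, hQR, one_mul, mul_one]
  have hWs : ∀ s : ℝ, ‖W s - R‖ ≤ C * |s| := by
    intro s
    have h0 : W 0 = R := by simp [hWdef]
    have := Convex.norm_image_sub_le_of_norm_hasDerivWithin_le
      (f := W) (f' := W') (s := Set.univ) (fun x _ => (hWd x).hasDerivWithinAt)
      (fun x _ => hW'bound x) convex_univ (Set.mem_univ (0:ℝ)) (Set.mem_univ s)
    rw [h0, sub_zero, Real.norm_eq_abs] at this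
    exact this
  have hcomm : ∀ s : ℝ, Commute (s • (-Q)) (s • Q) :=
    fun s => (((Commute.refl Q).neg_left).smul_left s).smul_right s
  have hinv : ∀ s : ℝ, exp (s • (-Q)) * exp (s • Q) = 1 := by
    intro s
    rw [← Matrix.exp_add_of_commute _ _ (hcomm s), show s • (-Q) + s • Q = (0 : Matrix _ _ ℂ) by
      simp [smul_neg], exp_zero]
  have hfac : ∀ s : ℝ, exp (s • Q) * R - R * exp (s • Q) = (W s - R) * exp (s • Q) := by
    intro s
    rw [sub_mul]
    congr 1
    rw [hWdef]
    dsimp only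
    rw [mul_assoc, mul_assoc, hinv s, mul_one]
  set G : ℝ → Matrix (Fin N → Fin 2) (Fin N → Fin 2) ℂ :=
    fun s => exp (s • P) * (exp (s • Q) * exp (s • R)) with hGdef
  set G2 : ℝ → Matrix (Fin N → Fin 2) (Fin N → Fin 2) ℂ :=
    fun s => exp (s • P) * (((W s - R) * exp (s • Q)) * exp (s • R)) with hG2def
  have hP2 : P = -Q - R := by
    rw [hPdef, hQdef, hRdef]
    simp [neg_smul, smul_add]
    abel
  have hGd : ∀ s : ℝ, HasDerivAt G (G2 s) s := by
    intro s
    have h : HasDerivAt G _ s := (hasDerivAt_expC P s).mul ((hasDerivAt_expC Q s).mul (hasDerivAt_expC R s))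
    convert h using 1
    rw [hG2def]
    dsimp only
    rw [← hfac s]
    have ha : P * exp (s • P) = exp (s • P) * P :=
      (((Commute.refl P).smul_right s).exp_right).eq
    rw [ha, hP2]
    noncomm_ring
  have hGbound : ∀ s ∈ Set.Icc (0:ℝ) δ, ‖G2 s‖ ≤ C * δ := by
    intro s hs
    have habs : |s| ≤ δ := by rw [abs_of_nonneg hs.1]; exact hs.2
    have e1 : ‖(W s - R) * exp (s • Q)‖ ≤ C * δ := by
      calc ‖(W s - R) * exp (s • Q)‖ ≤ ‖W s - R‖ * ‖exp (s • Q)‖ := norm_mul_le _ _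
        _ = ‖W s - R‖ := by rw [nQ s, mul_one]
        _ ≤ C * |s| := hWs s
        _ ≤ C * δ := mul_le_mul_of_nonneg_left habs (norm_nonneg _)
    calc ‖G2 s‖ ≤ ‖exp (s • P)‖ * ‖((W s - R) * exp (s • Q)) * exp (s • R)‖ :=
          norm_mul_le _ _
      _ ≤ ‖exp (s • P)‖ * (‖(W s - R) * exp (s • Q)‖ * ‖exp (s • R)‖) :=
          mul_le_mul_of_nonneg_left (norm_mul_le _ _) (norm_nonneg _)
      _ = ‖(W s - R) * exp (s • Q)‖ := by rw [nP s, nR s, one_mul, mul_one]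
      _ ≤ C * δ := e1
  have hGlip : ‖G δ - G 0‖ ≤ C * δ * δ := by
    have := Convex.norm_image_sub_le_of_norm_hasDerivWithin_le
      (f := G) (f' := G2) (s := Set.Icc 0 δ) (fun x _ => (hGd x).hasDerivWithinAt)
      hGbound (convex_Icc 0 δ) (Set.mem_Icc.mpr ⟨le_refl 0, hδ⟩) (Set.mem_Icc.mpr ⟨hδ, le_refl δ⟩)
    rw [sub_zero, Real.norm_eq_abs, abs_of_nonneg hδ] at this
    exact this
  have hG0 : G 0 = 1 := by simp [hGdef]
  have hUP : δ • ((-Complex.I) • (A + B)) = -(δ • P) := by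
    rw [hPdef, neg_smul, smul_neg]
  have hUG : exp (δ • ((-Complex.I) • (A + B))) * exp (δ • P) = 1 := by
    rw [hUP, ← Matrix.exp_add_of_commute _ _ ((Commute.refl (δ • P)).neg_left), neg_add_cancel, exp_zero]
  have hQ' : exp (δ • ((-Complex.I) • B)) = exp (δ • Q) := by rw [hQdef]
  have hR' : exp (δ • ((-Complex.I) • A)) = exp (δ • R) := by rw [hRdef]
  have key : exp (δ • ((-Complex.I) • (A + B)))
      - exp (δ • ((-Complex.I) • B)) * exp (δ • ((-Complex.I) • A))
      = exp (δ • ((-Complex.I) • (A + B))) * (G 0 - G δ) := by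
    rw [hG0, mul_sub, mul_one, hQ', hR']
    congr 1
    rw [hGdef]
    dsimp only
    rw [← mul_assoc, hUG, one_mul]
  rw [key]
  have hnU : ‖exp (δ • ((-Complex.I) • (A + B)))‖ = 1 := norm_exp_skew _ hcmI _ hABh δ
  calc ‖exp (δ • ((-Complex.I) • (A + B))) * (G 0 - G δ)‖
      ≤ ‖exp (δ • ((-Complex.I) • (A + B)))‖ * ‖G 0 - G δ‖ := norm_mul_le _ _
    _ = ‖G δ - G 0‖ := by rw [hnU, one_mul, norm_sub_rev]
    _ ≤ C * δ * δ := hGlip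

/-- Trotter bound: in the clustered-Hamiltonian setting, for `0 < ε ≤ d'·t` and
`m ≥ ⌈4 d' h_B t² / ε⌉`, `‖e^{−i(A+B)t} − (e^{−iBt/m} e^{−iAt/m})^m‖ ≤ 2ε`. -/
theorem trotter_step_bound {N : ℕ} (d' : ℕ)
    {ι₁ ι₂ : Type*} [Fintype ι₁] [Fintype ι₂]
    (H1 : ι₁ → Matrix (Fin N → Fin 2) (Fin N → Fin 2) ℂ)
    (H2 : ι₂ → Matrix (Fin N → Fin 2) (Fin N → Fin 2) ℂ)
    (S1 : ι₁ → Finset (Fin N)) (S2 : ι₂ → Finset (Fin N))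
    (h1herm : ∀ j, (H1 j).IsHermitian) (h2herm : ∀ j, (H2 j).IsHermitian)
    (h1act : ∀ j, ActsOn (S1 j) (H1 j)) (h2act : ∀ j, ActsOn (S2 j) (H2 j))
    (h1card : ∀ j, (S1 j).card ≤ 2) (h2card : ∀ j, (S2 j).card ≤ 2)
    (h1norm : ∀ j, ‖H1 j‖ ≤ 1) (h2norm : ∀ j, ‖H2 j‖ ≤ 1)
    (hdeg : ∀ q : Fin N,
      (Finset.univ.filter fun j => q ∈ S1 j).card
        + (Finset.univ.filter fun j => q ∈ S2 j).card ≤ d')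
    (A B : Matrix (Fin N → Fin 2) (Fin N → Fin 2) ℂ)
    (hA : A = ∑ j, H1 j) (hB : B = ∑ j, H2 j)
    (hb : ℝ) (hhb : hb = ∑ j, ‖H2 j‖)
    (t ε : ℝ) (ht : 0 ≤ t) (hε0 : 0 < ε) (hε : ε ≤ d' * t)
    (m : ℕ) (hm : (⌈4 * d' * hb * t ^ 2 / ε⌉₊ : ℕ) ≤ m) (hm0 : 0 < m) :
    ‖exp ((-(Complex.I * t)) • (A + B))
        - (exp ((-(Complex.I * (t / m))) • B) * exp ((-(Complex.I * (t / m))) • A)) ^ m‖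
      ≤ 2 * ε := by
  have hAh : A.IsHermitian := by
    rw [hA, Matrix.IsHermitian, Matrix.conjTranspose_sum]
    exact Finset.sum_congr rfl fun j _ => h1herm j
  have hBh : B.IsHermitian := by
    rw [hB, Matrix.IsHermitian, Matrix.conjTranspose_sum]
    exact Finset.sum_congr rfl fun j _ => h2herm j
  have hmR : (0:ℝ) < (m:ℝ) := by exact_mod_cast hm0
  set δ : ℝ := t / (m:ℝ) with hδdef
  have hδ0 : 0 ≤ δ := div_nonneg ht hmR.le
  set C : ℝ := ‖A * B - B * A‖ with hCdef
  have hC4 : C ≤ 4 * (d' : ℝ) * hb := by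
    rw [hhb]
    exact comm_norm_le d' H1 H2 S1 S2 h1act h2act h2card h1norm hdeg A B hA hB
  have hstep := step_bound A B hAh hBh δ hδ0
  -- rewrite the goal in terms of real smul
  have hcast : ((t:ℂ) / (m:ℂ)) = ((δ : ℝ) : ℂ) := by
    rw [hδdef]; push_cast; ring
  rw [smul_rw t (A + B), hcast, smul_rw δ B, smul_rw δ A]
  have hexp : exp ((t:ℝ) • ((-Complex.I) • (A + B)))
      = (exp (δ • ((-Complex.I) • (A + B)))) ^ m := by
    rw [← Matrix.exp_nsmul]
    congr 1
    rw [← Nat.cast_smul_eq_nsmul ℝ m, smul_smul]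
    congr 1
    rw [hδdef]
    field_simp
  rw [hexp]
  have hcmI : star (-Complex.I) = -(-Complex.I) := by
    simp [Complex.star_def, Complex.conj_I]
  have hABh : (A + B).IsHermitian := hAh.add hBh
  have hnU : ‖exp (δ • ((-Complex.I) • (A + B)))‖ ≤ 1 :=
    le_of_eq (norm_exp_skew _ hcmI _ hABh δ)
  have hnV : ‖exp (δ • ((-Complex.I) • B)) * exp (δ • ((-Complex.I) • A))‖ ≤ 1 := by
    calc ‖exp (δ • ((-Complex.I) • B)) * exp (δ • ((-Complex.I) • A))‖
        ≤ ‖exp (δ • ((-Complex.I) • B))‖ * ‖exp (δ • ((-Complex.I) • A))‖ := norm_mul_le _ _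
      _ = 1 := by rw [norm_exp_skew _ hcmI _ hBh δ, norm_exp_skew _ hcmI _ hAh δ, mul_one]
  have htel := aux_pow_sub hnU hnV m
  have hfinal : (m:ℝ) * (C * δ * δ) ≤ ε := by
    have hx : 4 * (d' : ℝ) * hb * t ^ 2 ≤ ε * m := by
      have h1 : 4 * (d' : ℝ) * hb * t ^ 2 / ε ≤ (m:ℝ) :=
        le_trans (Nat.le_ceil _) (Nat.cast_le.mpr hm)
      rw [div_le_iff₀ hε0] at h1
      linarith [h1]
    have heq : (m:ℝ) * (C * δ * δ) = C * t ^ 2 / m := by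
      rw [hδdef]; field_simp
    rw [heq, div_le_iff₀ hmR]
    have hCt : C * t ^ 2 ≤ 4 * (d' : ℝ) * hb * t ^ 2 :=
      mul_le_mul_of_nonneg_right hC4 (sq_nonneg t)
    linarith
  calc ‖(exp (δ • ((-Complex.I) • (A + B)))) ^ m
      - (exp (δ • ((-Complex.I) • B)) * exp (δ • ((-Complex.I) • A))) ^ m‖
      ≤ (m:ℝ) * ‖exp (δ • ((-Complex.I) • (A + B)))
          - exp (δ • ((-Complex.I) • B)) * exp (δ • ((-Complex.I) • A))‖ := htel
    _ ≤ (m:ℝ) * (C * δ * δ) := by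
        apply mul_le_mul_of_nonneg_left hstep (Nat.cast_nonneg m)
    _ ≤ ε := hfinal
    _ ≤ 2 * ε := by linarith
end

section
/- Let H = Σ_{j=1}^{L} H_j be a sum of Hermitian operators and h = Σ_j ‖H_j‖. For any ε with 0 < ε ≤ ht and any integer m ≥ ⌈2h²t²/ε⌉, ‖e^{−iHt/m} − Π_{j=1}^{L} e^{−iH_j t/m}‖ ≤ 2ε/m. -/
open NormedSpace Nat

section Aux

variable {𝔸 : Type*} [NormedRing 𝔸] [NormedAlgebra ℂ 𝔸] [CompleteSpace 𝔸] [NormOneClass 𝔸]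

lemma aux_exp_remainder (x : 𝔸) :
    ‖exp x - 1 - x‖ ≤ Real.exp ‖x‖ - 1 - ‖x‖ := by
  set f : ℕ → 𝔸 := fun n => ((n ! : ℂ)⁻¹ : ℂ) • x ^ n with hf
  set g : ℕ → ℝ := fun n => ‖x‖ ^ n / n ! with hg
  have hsf : Summable f := expSeries_summable' (𝕂 := ℂ) x
  have hsg : Summable g := Real.summable_pow_div_factorial ‖x‖
  have hsf2 : Summable (fun n => f (n + 2)) := (summable_nat_add_iff 2).mpr hsf
  have hsg2 : Summable (fun n => g (n + 2)) := (summable_nat_add_iff 2).mpr hsg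
  have hexp : exp x - 1 - x = ∑' n, f (n + 2) := by
    have h1 : exp x = ∑' n, f n := by rw [exp_eq_tsum (𝕂 := ℂ)]
    rw [h1, Summable.tsum_eq_zero_add hsf, Summable.tsum_eq_zero_add ((summable_nat_add_iff 1).mpr hsf)]
    have hf0 : f 0 = 1 := by simp [hf]
    have hf1 : f 1 = x := by simp [hf]
    simp only [hf0, hf1]
    abel
  have hrexp : Real.exp ‖x‖ - 1 - ‖x‖ = ∑' n, g (n + 2) := by
    have h1 : Real.exp ‖x‖ = ∑' n, g n := by
      rw [Real.exp_eq_exp_ℝ, exp_eq_tsum_div]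
    rw [h1, Summable.tsum_eq_zero_add hsg, Summable.tsum_eq_zero_add ((summable_nat_add_iff 1).mpr hsg)]
    have hg0 : g 0 = 1 := by simp [hg]
    have hg1 : g 1 = ‖x‖ := by simp [hg]
    rw [hg0, hg1]; ring
  have hsfn : Summable (fun n => ‖f n‖) := norm_expSeries_summable' (𝕂 := ℂ) x
  have hsfn2 : Summable (fun n => ‖f (n + 2)‖) := (summable_nat_add_iff 2).mpr hsfn
  rw [hexp, hrexp]
  refine (norm_tsum_le_tsum_norm hsfn2).trans (Summable.tsum_le_tsum ?_ hsfn2 hsg2)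
  intro n
  calc ‖f (n + 2)‖ = ((n + 2)! : ℝ)⁻¹ * ‖x ^ (n + 2)‖ := by
        rw [hf, norm_smul]
        norm_num
    _ ≤ ((n + 2)! : ℝ)⁻¹ * ‖x‖ ^ (n + 2) := by
        have hb : ‖x ^ (n + 2)‖ ≤ ‖x‖ ^ (n + 2) := norm_pow_le' x (by omega)
        have hc : (0:ℝ) ≤ ((n + 2)! : ℝ)⁻¹ := by positivity
        exact mul_le_mul_of_nonneg_left hb hc
    _ = g (n + 2) := by rw [hg]; ring

lemma aux_norm_of_remainder {y : 𝔸} {S : 𝔸} {r s : ℝ} (hr : ‖y - 1 - S‖ ≤ r)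
    (hS : ‖S‖ ≤ s) : ‖y‖ ≤ r + 1 + s := by
  have hy : y = (y - 1 - S) + 1 + S := by abel
  calc ‖y‖ = ‖(y - 1 - S) + 1 + S‖ := by rw [← hy]
    _ ≤ ‖y - 1 - S‖ + ‖(1 : 𝔸)‖ + ‖S‖ := norm_add₃_le
    _ ≤ r + 1 + s := by rw [norm_one]; gcongr

omit [NormedAlgebra ℂ 𝔸] [CompleteSpace 𝔸] [NormOneClass 𝔸] in
lemma aux_norm_list_sum_le (l : List 𝔸) : ‖l.sum‖ ≤ (l.map norm).sum := by
  induction l with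
  | nil => simp
  | cons a l ih =>
    simp only [List.sum_cons, List.map_cons]
    exact (norm_add_le _ _).trans (by linarith)

lemma aux_exp_prod_remainder (l : List 𝔸) :
    ‖(l.map exp).prod - 1 - l.sum‖
      ≤ Real.exp ((l.map norm).sum) - 1 - (l.map norm).sum := by
  induction l with
  | nil => simp
  | cons a l ih =>
    set P := (l.map exp).prod with hP
    set S := l.sum with hS
    set s := (l.map norm).sum with hs
    have hs0 : 0 ≤ s := by
      rw [hs]
      exact List.sum_nonneg (by simp +contextual [norm_nonneg])
    have hSs : ‖S‖ ≤ s := aux_norm_list_sum_le l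
    have hPn : ‖P‖ ≤ Real.exp s := by
      have := aux_norm_of_remainder ih hSs
      nlinarith
    have ha := aux_exp_remainder a
    have key : (exp a) * P - 1 - (a + S)
        = (P - 1 - S) + a * (S + (P - 1 - S)) + (exp a - 1 - a) * P := by
      noncomm_ring
    have h2 : ‖a * (S + (P - 1 - S))‖ ≤ ‖a‖ * (s + (Real.exp s - 1 - s)) := by
      refine (norm_mul_le _ _).trans ?_
      gcongr
      exact (norm_add_le _ _).trans (add_le_add hSs ih)
    have h3 : ‖(exp a - 1 - a) * P‖ ≤ (Real.exp ‖a‖ - 1 - ‖a‖) * Real.exp s := by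
      refine (norm_mul_le _ _).trans ?_
      have hra : 0 ≤ Real.exp ‖a‖ - 1 - ‖a‖ := by
        nlinarith [ha, norm_nonneg (exp a - 1 - a)]
      exact mul_le_mul ha hPn (norm_nonneg _) hra
    simp only [List.map_cons, List.prod_cons, List.sum_cons]
    rw [key]
    calc ‖(P - 1 - S) + a * (S + (P - 1 - S)) + (exp a - 1 - a) * P‖
        ≤ ‖P - 1 - S‖ + ‖a * (S + (P - 1 - S))‖ + ‖(exp a - 1 - a) * P‖ := norm_add₃_le
      _ ≤ (Real.exp s - 1 - s) + ‖a‖ * (s + (Real.exp s - 1 - s))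
            + (Real.exp ‖a‖ - 1 - ‖a‖) * Real.exp s := add_le_add (add_le_add ih h2) h3
      _ ≤ Real.exp (‖a‖ + s) - 1 - (‖a‖ + s) := by
          rw [Real.exp_add]; nlinarith [Real.exp_pos s, Real.exp_pos ‖a‖]

end Aux

set_option maxHeartbeats 1000000 in
/-- For `H = Σ_{j=1}^L H_j` with Hermitian `H_j`, total strength `h = Σ_j ‖H_j‖`,
`0 < ε ≤ h·t`, and `m ≥ ⌈2 h² t² / ε⌉`:
`‖e^{−iHt/m} − Π_{j=1}^L e^{−iH_j t/m}‖ ≤ 2ε/m`. -/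
theorem trotter_single_step_bound {E : Type*} [NormedAddCommGroup E]
    [InnerProductSpace ℂ E] [FiniteDimensional ℂ E]
    (L : ℕ) (H : Fin L → E →L[ℂ] E) (hherm : ∀ j, IsSelfAdjoint (H j))
    (h t ε : ℝ) (hh : h = ∑ j, ‖H j‖) (ht : 0 ≤ t)
    (hε0 : 0 < ε) (hε : ε ≤ h * t)
    (m : ℕ) (hm : (⌈2 * h ^ 2 * t ^ 2 / ε⌉₊ : ℕ) ≤ m) (hm0 : 0 < m) :
    ‖exp ((-(Complex.I * (t / m))) • (∑ j, H j))
        - ((List.finRange L).map fun j => exp ((-(Complex.I * (t / m))) • H j)).prod‖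
      ≤ 2 * ε / m := by
  have hmR : (0:ℝ) < (m:ℝ) := by exact_mod_cast hm0
  have hht : 0 < h * t := lt_of_lt_of_le hε0 hε
  have hh0 : 0 ≤ h := by
    rw [hh]; exact Finset.sum_nonneg fun j _ => norm_nonneg _
  have hhpos : 0 < h := by nlinarith
  have htpos : 0 < t := by nlinarith
  have hmge : 2 * h ^ 2 * t ^ 2 / ε ≤ (m:ℝ) := by
    refine le_trans (Nat.le_ceil _) ?_
    exact_mod_cast hm
  have hmε : 2 * h ^ 2 * t ^ 2 ≤ (m:ℝ) * ε := by
    rw [div_le_iff₀ hε0] at hmge; linarith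
  rcases subsingleton_or_nontrivial E with hE | hE
  · have hz : exp ((-(Complex.I * (t / m))) • (∑ j, H j))
        = ((List.finRange L).map fun j => exp ((-(Complex.I * (t / m))) • H j)).prod :=
      Subsingleton.elim _ _
    rw [hz, sub_self, norm_zero]
    positivity
  · set c : ℂ := -(Complex.I * (t / m)) with hc
    have hcn : ‖c‖ = t / m := by
      rw [hc, norm_neg, norm_mul, Complex.norm_I, one_mul]
      rw [show ((t:ℂ) / (m:ℂ)) = (((t / m : ℝ)):ℂ) by push_cast; ring]
      rw [Complex.norm_real, Real.norm_eq_abs, abs_of_nonneg (by positivity)]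
    set l : List (E →L[ℂ] E) := List.ofFn (fun j => c • H j) with hl
    set s : ℝ := t / m * h with hsdef
    have hs0 : 0 ≤ s := by positivity
    have hprod : ((List.finRange L).map fun j => exp (c • H j)).prod
        = (l.map exp).prod := by
      rw [hl, List.map_ofFn, List.ofFn_eq_map]
      rfl
    have hsum : l.sum = c • ∑ j, H j := by
      rw [hl, List.sum_ofFn, Finset.smul_sum]
    have hns : (l.map norm).sum = s := by
      rw [hl, List.map_ofFn, List.sum_ofFn]
      have : ∀ j, ((norm ∘ fun j => c • H j) j) = (t / m) * ‖H j‖ := by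
        intro j
        show ‖c • H j‖ = _
        rw [norm_smul c (H j), hcn]
      rw [Finset.sum_congr rfl (fun j _ => this j), ← Finset.mul_sum, ← hh, hsdef]
    have hXs : ‖c • ∑ j, H j‖ ≤ s := by
      rw [norm_smul c (∑ j, H j), hcn, hsdef]
      have hle : ‖∑ j, H j‖ ≤ h := by
        rw [hh]; exact norm_sum_le _ _
      have h1 : (0:ℝ) ≤ t / m := by positivity
      exact mul_le_mul_of_nonneg_left hle h1
    set X : E →L[ℂ] E := c • ∑ j, H j with hX
    clear_value c l s X
    have h1 : ‖exp X - 1 - X‖ ≤ Real.exp ‖X‖ - 1 - ‖X‖ := aux_exp_remainder X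
    have hmono : Real.exp ‖X‖ - 1 - ‖X‖ ≤ Real.exp s - 1 - s := by
      have e1 : Real.exp s = Real.exp ‖X‖ * Real.exp (s - ‖X‖) := by
        rw [← Real.exp_add]; ring_nf
      nlinarith [e1, Real.add_one_le_exp (s - ‖X‖),
        Real.one_le_exp (norm_nonneg X), Real.exp_pos ‖X‖, hXs]
    have h2 : ‖(l.map exp).prod - 1 - X‖ ≤ Real.exp s - 1 - s := by
      rw [← hsum]
      have := aux_exp_prod_remainder l
      rwa [hns] at this
    have htri : ‖exp X - (l.map exp).prod‖ ≤ 2 * (Real.exp s - 1 - s) := by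
      have : exp X - (l.map exp).prod
          = (exp X - 1 - X) - ((l.map exp).prod - 1 - X) := by abel
      rw [this]
      refine (norm_sub_le _ _).trans ?_
      linarith
    have hm2 : 2 * (h * t) ≤ (m:ℝ) := by
      nlinarith [mul_le_mul_of_nonneg_left hε hmR.le, hmε, hht]
    have hseq : s * (m:ℝ) = h * t := by rw [hsdef]; field_simp
    have hsle : s ≤ 1 / 2 :=
      le_of_mul_le_mul_right (by linarith [hseq, hm2] : s * (m:ℝ) ≤ 1 / 2 * (m:ℝ)) hmR
    have hexpb : Real.exp s - 1 - s ≤ s ^ 2 := by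
      have hb := Real.exp_bound' hs0 (by linarith : s ≤ 1) (n := 2) (by norm_num)
      simp only [Finset.sum_range_succ, Finset.sum_range_zero, Nat.factorial] at hb
      norm_num at hb
      nlinarith [hb, sq_nonneg s]
    have hs2 : s ^ 2 * (m:ℝ) ≤ ε / 2 := by
      have h2 : (s * (m:ℝ)) ^ 2 = h ^ 2 * t ^ 2 := by rw [hseq]; ring
      refine le_of_mul_le_mul_right ?_ hmR
      nlinarith [h2, hmε]
    rw [hprod]
    refine htri.trans ?_
    have : 2 * (Real.exp s - 1 - s) ≤ 2 * s ^ 2 := by linarith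
    refine this.trans ?_
    rw [le_div_iff₀ hmR]
    linarith [hs2, hε0]
end

section
/- Let r and K be positive integers and suppose for each j ∈ {1,…,r} and each index assignment s, real values a(j)_s and ã(j)_s satisfy |a(j)_s| ≤ 1 for all products over subsets (i.e., any partial contraction has entries of norm at most 1) and |a(j)_s − ã(j)_s| ≤ δ with 0 ≤ δ ≤ 1/(r·8^{d'}), where d' bounds the number of indices of each tensor (each index ranging over 8 values). Then the contracted tensor-network values satisfy |T(g,ã) − T(g,a)| ≤ (e−1)·r·8^{d'}·δ. -/
/-- Perturbation bound for tensor-network values.  The network has vertices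
`Fin r`, edges `Fin K` with endpoints given by `edges`, and tensors `a v`
(encoded as functions of a global index assignment, depending only on the
edges incident to `v`, each index ranging over `Fin 8`).  If every partial
contraction of `a` has entries of absolute value at most 1, each vertex has
degree at most `d'`, and `a2` is entry-wise `δ`-close to `a` with
`0 ≤ δ ≤ 1/(r·8^{d'})`, then `|T(g,a2) − T(g,a)| ≤ (e−1)·r·8^{d'}·δ`. -/
theorem tensor_network_perturbation_bound
    (r K d' : ℕ) (hr : 0 < r)
    (edges : Fin K → Fin r × Fin r)
    (a a2 : Fin r → (Fin K → Fin 8) → ℝ)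
    (hdep : ∀ v s s', (∀ e, ((edges e).1 = v ∨ (edges e).2 = v) → s e = s' e) →
      a v s = a v s')
    (hdep' : ∀ v s s', (∀ e, ((edges e).1 = v ∨ (edges e).2 = v) → s e = s' e) →
      a2 v s = a2 v s')
    (hdeg : ∀ v, (Finset.univ.filter fun e => (edges e).1 = v ∨ (edges e).2 = v).card ≤ d')
    (hcontr : ∀ (L : Finset (Fin r)) (s : Fin K → Fin 8),
      |∑ s' : Fin K → Fin 8,
          if (∀ e, ¬((edges e).1 ∈ L ∧ (edges e).2 ∈ L) → s' e = s e)
          then ∏ v ∈ L, a v s' else 0| ≤ 1)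
    (δ : ℝ) (hδ0 : 0 ≤ δ) (hδ : δ ≤ 1 / (r * 8 ^ d'))
    (hclose : ∀ v s, |a v s - a2 v s| ≤ δ) :
    |(∑ s : Fin K → Fin 8, ∏ v, a2 v s) - ∑ s : Fin K → Fin 8, ∏ v, a v s|
      ≤ (Real.exp 1 - 1) * r * 8 ^ d' * δ := by
  classical
  open Finset in
  have hx0 : (0:ℝ) ≤ 8 ^ d' * δ := by positivity
  have key : ∀ S : Finset (Fin r),
      |∑ s : Fin K → Fin 8,
          (∏ v ∈ S, (a2 v s - a v s)) * ∏ v ∈ (univ : Finset (Fin r)) \ S, a v s|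
        ≤ (8 ^ d' * δ) ^ S.card := by
    intro S
    classical
    set B : Finset (Fin K) :=
      univ.filter (fun e => (edges e).1 ∈ S ∨ (edges e).2 ∈ S) with hBdef
    set N : (Fin K → Fin 8) → (Fin K → Fin 8) :=
      fun s e => if e ∈ B then s e else 1 with hNdef
    set D : (Fin K → Fin 8) → ℝ := fun s => ∏ v ∈ S, (a2 v s - a v s) with hDdef
    set A : (Fin K → Fin 8) → ℝ := fun s => ∏ v ∈ (univ : Finset (Fin r)) \ S, a v s with hAdef
    -- D depends only on values on B
    have hDdep : ∀ s t : Fin K → Fin 8, (∀ e ∈ B, s e = t e) → D s = D t := by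
      intro s t h
      refine Finset.prod_congr rfl fun v hv => ?_
      have h' : ∀ e, ((edges e).1 = v ∨ (edges e).2 = v) → s e = t e := by
        intro e he
        refine h e (mem_filter.2 ⟨mem_univ _, ?_⟩)
        rcases he with he | he
        · exact Or.inl (he ▸ hv)
        · exact Or.inr (he ▸ hv)
      rw [hdep' v s t h', hdep v s t h']
    -- fiberwise decomposition
    have hfib : (∑ s : Fin K → Fin 8, D s * A s)
        = ∑ t : Fin K → Fin 8, ∑ s ∈ univ.filter fun s => N s = t, D s * A s := by
      rw [Finset.sum_fiberwise_of_maps_to (fun s _ => mem_univ (N s))]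
    rw [hfib]
    have habs : ∀ t : Fin K → Fin 8,
        |∑ s ∈ univ.filter fun s => N s = t, D s * A s|
          ≤ if N t = t then δ ^ S.card else 0 := by
      intro t
      by_cases ht : N t = t
      · simp only [ht, if_true]
        have heq : ∀ s ∈ univ.filter fun s => N s = t, D s * A s = D t * A s := by
          intro s hs
          have hNs : N s = t := (mem_filter.1 hs).2
          have : ∀ e ∈ B, s e = t e := by
            intro e he
            have := congrFun hNs e
            simpa [hNdef, he] using this
          rw [hDdep s t this]
        rw [Finset.sum_congr rfl heq, ← Finset.mul_sum, abs_mul]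
        have hD : |D t| ≤ δ ^ S.card := by
          rw [hDdef, abs_prod]
          calc ∏ v ∈ S, |a2 v t - a v t| ≤ ∏ v ∈ S, δ := by
                refine Finset.prod_le_prod (fun v _ => abs_nonneg _) fun v _ => ?_
                rw [abs_sub_comm]; exact hclose v t
            _ = δ ^ S.card := by rw [Finset.prod_const]
        have hA : |∑ s ∈ univ.filter fun s => N s = t, A s| ≤ 1 := by
          have hsum : (∑ s ∈ univ.filter fun s => N s = t, A s)
              = ∑ s' : Fin K → Fin 8,
                  if (∀ e, ¬((edges e).1 ∈ (univ : Finset (Fin r)) \ S ∧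
                      (edges e).2 ∈ (univ : Finset (Fin r)) \ S) → s' e = t e)
                  then ∏ v ∈ (univ : Finset (Fin r)) \ S, a v s' else 0 := by
            rw [Finset.sum_filter]
            refine Finset.sum_congr rfl fun s _ => ?_
            have hcond : (N s = t) ↔
                (∀ e, ¬((edges e).1 ∈ (univ : Finset (Fin r)) \ S ∧
                    (edges e).2 ∈ (univ : Finset (Fin r)) \ S) → s e = t e) := by
              have hBmem : ∀ e, e ∈ B ↔
                  ¬((edges e).1 ∈ (univ : Finset (Fin r)) \ S ∧
                    (edges e).2 ∈ (univ : Finset (Fin r)) \ S) := by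
                intro e
                simp only [hBdef, mem_filter, mem_univ, true_and, mem_sdiff]
                tauto
              constructor
              · intro hNs e he
                have := congrFun hNs e
                rw [← (hBmem e)] at he
                simpa [hNdef, he] using this
              · intro h
                funext e
                by_cases he : e ∈ B
                · simp only [hNdef, he, if_true]
                  exact h e ((hBmem e).1 he)
                · simp only [hNdef, he, if_false]
                  have := congrFun ht e
                  simp only [hNdef, he, if_false] at this
                  exact this
            simp only [hcond, hAdef]
          rw [hsum]
          exact hcontr _ t
        calc |D t| * |∑ s ∈ univ.filter fun s => N s = t, A s|
            ≤ δ ^ S.card * 1 := by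
              exact mul_le_mul hD hA (abs_nonneg _) (pow_nonneg hδ0 _)
          _ = δ ^ S.card := mul_one _
      · simp only [ht, if_false]
        have : (univ.filter fun s => N s = t) = ∅ := by
          rw [Finset.filter_eq_empty_iff]
          intro s _
          intro hNs
          apply ht
          have hidem : N (N s) = N s := by
            funext e
            by_cases he : e ∈ B <;> simp [hNdef, he]
          rw [← hNs, hidem]
        rw [this]
        simp
    calc |∑ t : Fin K → Fin 8, ∑ s ∈ univ.filter fun s => N s = t, D s * A s|
        ≤ ∑ t : Fin K → Fin 8, |∑ s ∈ univ.filter fun s => N s = t, D s * A s| :=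
          Finset.abs_sum_le_sum_abs _ _
      _ ≤ ∑ t : Fin K → Fin 8, if N t = t then δ ^ S.card else 0 :=
          Finset.sum_le_sum fun t _ => habs t
      _ = (univ.filter fun t => N t = t).card * δ ^ S.card := by
          rw [← Finset.sum_filter, Finset.sum_const, nsmul_eq_mul]
      _ ≤ (8 ^ d' * δ) ^ S.card := by
          have hcard : (univ.filter fun t => N t = t).card ≤ 8 ^ B.card := by
            have hinj : Set.InjOn (fun t : Fin K → Fin 8 => (fun e : ↥B => t e.1))
                (univ.filter fun t => N t = t) := by
              intro t1 h1 t2 h2 h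
              have ht1 : N t1 = t1 := (mem_filter.1 h1).2
              have ht2 : N t2 = t2 := (mem_filter.1 h2).2
              funext e
              by_cases he : e ∈ B
              · exact congrFun h ⟨e, he⟩
              · have e1 := congrFun ht1 e
                have e2 := congrFun ht2 e
                simp only [hNdef, he, if_false] at e1 e2
                rw [← e1, ← e2]
            calc (univ.filter fun t => N t = t).card
                ≤ Fintype.card (↥B → Fin 8) := by
                  have := Finset.card_le_card_of_injOn _ (fun t _ => Finset.mem_univ _) hinj
                  simpa using this
              _ = 8 ^ B.card := by
                  rw [Fintype.card_fun]
                  simp [Fintype.card_coe]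
          have hBcard : B.card ≤ S.card * d' := by
            have hsub : B ⊆ S.biUnion
                (fun v => univ.filter fun e => (edges e).1 = v ∨ (edges e).2 = v) := by
              intro e he
              have := (mem_filter.1 he).2
              rcases this with h | h
              · exact Finset.mem_biUnion.2 ⟨(edges e).1, h,
                  mem_filter.2 ⟨mem_univ _, Or.inl rfl⟩⟩
              · exact Finset.mem_biUnion.2 ⟨(edges e).2, h,
                  mem_filter.2 ⟨mem_univ _, Or.inr rfl⟩⟩
            calc B.card ≤ _ := Finset.card_le_card hsub
              _ ≤ ∑ v ∈ S, (univ.filter fun e => (edges e).1 = v ∨ (edges e).2 = v).card :=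
                  Finset.card_biUnion_le
              _ ≤ ∑ v ∈ S, d' := Finset.sum_le_sum fun v _ => hdeg v
              _ = S.card * d' := by rw [Finset.sum_const, smul_eq_mul]
          have h8 : ((univ.filter fun t => N t = t).card : ℝ) ≤ (8 : ℝ) ^ (S.card * d') := by
            calc ((univ.filter fun t => N t = t).card : ℝ) ≤ ((8 : ℕ) ^ B.card : ℕ) := by
                  exact_mod_cast hcard
              _ ≤ ((8 : ℕ) ^ (S.card * d') : ℕ) := by
                  exact_mod_cast Nat.pow_le_pow_right (by norm_num) hBcard
              _ = (8 : ℝ) ^ (S.card * d') := by push_cast; ring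
          calc ((univ.filter fun t => N t = t).card : ℝ) * δ ^ S.card
              ≤ (8 : ℝ) ^ (S.card * d') * δ ^ S.card := by
                exact mul_le_mul_of_nonneg_right h8 (pow_nonneg hδ0 _)
            _ = (8 ^ d' * δ) ^ S.card := by
                rw [mul_pow, ← pow_mul, Nat.mul_comm]
  have htel : (∑ s : Fin K → Fin 8, ∏ v, a2 v s) - ∑ s : Fin K → Fin 8, ∏ v, a v s
      = ∑ S ∈ (univ : Finset (Fin r)).powerset.erase ∅,
          ∑ s : Fin K → Fin 8,
            (∏ v ∈ S, (a2 v s - a v s)) * ∏ v ∈ (univ : Finset (Fin r)) \ S, a v s := by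
    have hptw : ∀ s : Fin K → Fin 8, (∏ v, a2 v s) - ∏ v, a v s
        = ∑ S ∈ (univ : Finset (Fin r)).powerset.erase ∅,
            (∏ v ∈ S, (a2 v s - a v s)) * ∏ v ∈ (univ : Finset (Fin r)) \ S, a v s := by
      intro s
      have h1 : (∏ v, a2 v s) = ∏ v : Fin r, ((a2 v s - a v s) + a v s) := by
        refine Finset.prod_congr rfl fun v _ => by ring
      rw [h1, Finset.prod_add]
      rw [← Finset.add_sum_erase _ _ (Finset.empty_mem_powerset _)]
      simp only [Finset.prod_empty, one_mul, Finset.sdiff_empty]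
      ring
    rw [← Finset.sum_sub_distrib]
    rw [Finset.sum_congr rfl fun s _ => hptw s, Finset.sum_comm]
  have hsum : ∑ S ∈ (univ : Finset (Fin r)).powerset.erase ∅, (8 ^ d' * δ) ^ S.card
      = (8 ^ d' * δ + 1) ^ r - 1 := by
    have h : ∑ S ∈ (univ : Finset (Fin r)).powerset, (8 ^ d' * δ) ^ S.card
        = (8 ^ d' * δ + 1) ^ r := by
      have := Finset.prod_add (fun _ : Fin r => (8:ℝ) ^ d' * δ) (fun _ : Fin r => 1) univ
      simp only [Finset.prod_const, Finset.prod_const_one, mul_one, one_pow,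
        Finset.card_univ, Fintype.card_fin] at this
      exact this.symm
    have h2 := Finset.add_sum_erase _ (fun S : Finset (Fin r) => ((8:ℝ) ^ d' * δ) ^ S.card)
      (Finset.empty_mem_powerset (univ : Finset (Fin r)))
    rw [← h2] at h
    simp only [Finset.card_empty, pow_zero] at h
    linarith
  have hrpos : (0:ℝ) < r := by exact_mod_cast hr
  have hpos : (0:ℝ) < r * 8 ^ d' := by positivity
  have ht1 : (r:ℝ) * (8 ^ d' * δ) ≤ 1 := by
    have h := mul_le_mul_of_nonneg_left hδ (le_of_lt hpos)
    rw [mul_one_div, div_self (ne_of_gt hpos)] at h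
    calc (r:ℝ) * (8 ^ d' * δ) = r * 8 ^ d' * δ := by ring
      _ ≤ 1 := h
  have ht0 : (0:ℝ) ≤ (r:ℝ) * (8 ^ d' * δ) := by positivity
  have hexp : (8 ^ d' * δ + 1) ^ r - 1 ≤ (Real.exp 1 - 1) * ((r:ℝ) * (8 ^ d' * δ)) := by
    set t : ℝ := (r:ℝ) * (8 ^ d' * δ) with htdef
    have h1 : ((8:ℝ) ^ d' * δ + 1) ^ r ≤ Real.exp t := by
      calc ((8:ℝ) ^ d' * δ + 1) ^ r ≤ Real.exp (8 ^ d' * δ) ^ r :=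
            pow_le_pow_left₀ (by linarith) (by linarith [Real.add_one_le_exp ((8:ℝ) ^ d' * δ)]) r
        _ = Real.exp t := by rw [htdef, ← Real.exp_nat_mul]
    have h2 : Real.exp t ≤ (1 - t) * 1 + t * Real.exp 1 := by
      have := convexOn_exp.2 (Set.mem_univ (0:ℝ)) (Set.mem_univ (1:ℝ))
        (by linarith : (0:ℝ) ≤ 1 - t) ht0 (by ring)
      simpa [Real.exp_zero, smul_eq_mul] using this
    nlinarith
  calc |(∑ s : Fin K → Fin 8, ∏ v, a2 v s) - ∑ s : Fin K → Fin 8, ∏ v, a v s|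
      = |∑ S ∈ (univ : Finset (Fin r)).powerset.erase ∅,
          ∑ s : Fin K → Fin 8,
            (∏ v ∈ S, (a2 v s - a v s)) * ∏ v ∈ (univ : Finset (Fin r)) \ S, a v s| := by
        rw [htel]
    _ ≤ ∑ S ∈ (univ : Finset (Fin r)).powerset.erase ∅,
          |∑ s : Fin K → Fin 8,
            (∏ v ∈ S, (a2 v s - a v s)) * ∏ v ∈ (univ : Finset (Fin r)) \ S, a v s| :=
        Finset.abs_sum_le_sum_abs _ _
    _ ≤ ∑ S ∈ (univ : Finset (Fin r)).powerset.erase ∅, (8 ^ d' * δ) ^ S.card :=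
        Finset.sum_le_sum fun S _ => key S
    _ = (8 ^ d' * δ + 1) ^ r - 1 := hsum
    _ ≤ (Real.exp 1 - 1) * ((r:ℝ) * (8 ^ d' * δ)) := hexp
    _ = (Real.exp 1 - 1) * r * 8 ^ d' * δ := by ring
end
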